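/- arXiv:2402.03536 — 2 statements merged into one kernel-verified Lean document; each statement's English description precedes it below -/
import Mathlib

section
/- In dimension 4, define a bracket by [e₁,e₂] = (a+b)e₂, [e₃,e₄] = c·e₂, [e₁,e₃] = a·e₃ + β·e₄, [e₁,e₄] = α·e₃ + b·e₄ (all other basis brackets zero), for arbitrary real parameters a, b, c, α, β. Then this bracket satisfies the Jacobi identity, so it defines a solvable Lie algebra. -/
/-!
The Jacobiator of an alternating bracket is an alternating trilinear map, so it vanishes as
soon as it vanishes on the strictly increasing basis triples. For this bracket
(with `e₁ = b 0`, …, `e₄ = b 3`) three of the four triples are immediate; the triple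
`(e₁, e₃, e₄)` says that `ad e₁` is a derivation of the ideal `n = span {e₂, e₃, e₄}`,
i.e. `c (a + b') = c a + c b'`.
Solvability: all brackets lie in `n`, brackets of `n` lie in `ℝ e₂`, and `⁅e₂, e₂⁆ = 0`.
-/

open Submodule

namespace LinearMap

variable {R M : Type*} [CommRing R] [AddCommGroup M] [Module R M] (μ : M →ₗ[R] M →ₗ[R] M)

def jacobiator : M →ₗ[R] M →ₗ[R] M →ₗ[R] M :=
  mk₂ R (fun x y => μ x ∘ₗ μ y + μ y ∘ₗ μ.flip x + μ.flip (μ x y))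
    (fun _ _ _ => by ext; simp only [map_add, add_apply, comp_apply, flip_apply]; abel)
    (fun _ _ _ => by
      ext; simp only [map_smul, add_apply, smul_apply, comp_apply, flip_apply, smul_add])
    (fun _ _ _ => by ext; simp only [map_add, add_apply, comp_apply, flip_apply]; abel)
    (fun _ _ _ => by
      ext; simp only [map_smul, add_apply, smul_apply, comp_apply, flip_apply, smul_add])

@[simp]
lemma jacobiator_apply (x y z : M) :
    μ.jacobiator x y z = μ x (μ y z) + μ y (μ z x) + μ z (μ x y) := rfl

lemma jacobiator_rotate (x y z : M) : μ.jacobiator y z x = μ.jacobiator x y z := by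
  simp only [jacobiator_apply]; abel

variable {μ}

lemma IsAlt.jacobiator_swap (hμ : μ.IsAlt) (x y z : M) :
    μ.jacobiator y x z = -μ.jacobiator x y z := by
  simp only [jacobiator_apply, ← hμ.neg y x, ← hμ.neg z y, ← hμ.neg x z, map_neg]
  abel

lemma IsAlt.jacobiator_self (hμ : μ.IsAlt) (x z : M) : μ.jacobiator x x z = 0 := by
  simp only [jacobiator_apply, hμ.self_eq_zero, map_zero, ← hμ.neg z x, map_neg]
  abel

lemma IsAlt.jacobiator_eq_zero_of_basis {ι : Type*} [LinearOrder ι] (hμ : μ.IsAlt)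
    (b : Module.Basis ι R M)
    (h : ∀ i j k, i < j → j < k → μ.jacobiator (b i) (b j) (b k) = 0) (x y z : M) :
    μ.jacobiator x y z = 0 := by
  have hlt : ∀ i j k, i < j → μ.jacobiator (b i) (b j) (b k) = 0 := by
    intro i j k hij
    rcases lt_trichotomy j k with hjk | rfl | hkj
    · exact h i j k hij hjk
    · rw [← jacobiator_rotate, hμ.jacobiator_self]
    rcases lt_trichotomy i k with hik | rfl | hki
    · rw [jacobiator_rotate, hμ.jacobiator_swap, h i k j hik hkj, neg_zero]
    · rw [jacobiator_rotate, hμ.jacobiator_self]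
    · rw [jacobiator_rotate, h k i j hki hij]
  suffices μ.jacobiator = 0 by simp [this]
  refine b.ext fun i => b.ext fun j => b.ext fun k => ?_
  rcases lt_trichotomy i j with hij | rfl | hji
  · exact hlt i j k hij
  · exact hμ.jacobiator_self _ _
  · rw [zero_apply, zero_apply, zero_apply, hμ.jacobiator_swap, hlt j i k hji, neg_zero]

lemma apply_mem_of_mem_span {N P : Type*} [AddCommGroup N] [Module R N] [AddCommGroup P]
    [Module R P] (f : M →ₗ[R] N →ₗ[R] P) {s : Set M} {t : Set N} {p : Submodule R P}
    (h : ∀ x ∈ s, ∀ y ∈ t, f x y ∈ p) {x : M} {y : N} (hx : x ∈ span R s)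
    (hy : y ∈ span R t) : f x y ∈ p := by
  refine map₂_le.mp ?_ x hx y hy
  rw [map₂_span_span, span_le]
  exact Set.image2_subset_iff.mpr h

end LinearMap

/-- In dimension 4, the bracket `⁅e₁,e₂⁆ = (a+b)e₂`, `⁅e₃,e₄⁆ = c e₂`,
`⁅e₁,e₃⁆ = a e₃ + β e₄`, `⁅e₁,e₄⁆ = α e₃ + b e₄` (all other basis brackets zero),
for arbitrary real parameters `a, b, c, α, β`, satisfies the Jacobi identity, and the
resulting Lie algebra is solvable (its third derived algebra vanishes). -/
theorem dim4_solvable_family_jacobi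
    (V : Type*) [AddCommGroup V] [Module ℝ V]
    (b : Module.Basis (Fin 4) ℝ V)
    (μ : V →ₗ[ℝ] V →ₗ[ℝ] V)
    (halt : ∀ x y : V, μ x y = - μ y x)
    (a b' c α β : ℝ)
    (h12 : μ (b 0) (b 1) = (a + b') • b 1)
    (h34 : μ (b 2) (b 3) = c • b 1)
    (h13 : μ (b 0) (b 2) = a • b 2 + β • b 3)
    (h14 : μ (b 0) (b 3) = α • b 2 + b' • b 3)
    (h23 : μ (b 1) (b 2) = 0)
    (h24 : μ (b 1) (b 3) = 0) :
    (∀ x y z : V, μ x (μ y z) + μ y (μ z x) + μ z (μ x y) = 0) ∧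
    (∀ x1 x2 x3 x4 x5 x6 x7 x8 : V,
      μ (μ (μ x1 x2) (μ x3 x4)) (μ (μ x5 x6) (μ x7 x8)) = 0) := by
  have : IsAddTorsionFree V := .of_isTorsionFree ℝ V
  have hμ : μ.IsAlt := fun x => self_eq_neg.mp (halt x x)
  have h21 : μ (b 1) (b 0) = -((a + b') • b 1) := by rw [halt, h12]
  have h31 : μ (b 2) (b 0) = -(a • b 2 + β • b 3) := by rw [halt, h13]
  have h41 : μ (b 3) (b 0) = -(α • b 2 + b' • b 3) := by rw [halt, h14]
  have h43 : μ (b 3) (b 2) = -(c • b 1) := by rw [halt, h34]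
  have h32 : μ (b 2) (b 1) = 0 := by rw [halt, h23, neg_zero]
  have h42 : μ (b 3) (b 1) = 0 := by rw [halt, h24, neg_zero]
  constructor
  · refine hμ.jacobiator_eq_zero_of_basis b fun i j k hij hjk => ?_
    fin_cases i <;> fin_cases j <;> fin_cases k <;> simp at hij hjk <;>
      simp [h12, h13, h34, h23, h24, h31, h41, h43, h32, h42, hμ.self_eq_zero]
    module
  set n := span ℝ {b 1, b 2, b 3}
  set z := span ℝ {b 1}
  have hn : ∀ x y, μ x y ∈ n := by
    refine fun x y => μ.apply_mem_of_mem_span ?_ (b.mem_span x) (b.mem_span y)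
    rintro _ ⟨i, rfl⟩ _ ⟨j, rfl⟩
    fin_cases i <;> fin_cases j <;>
      simp [h12, h13, h14, h34, h23, h24, h21, h31, h41, h43, h32, h42, hμ.self_eq_zero] <;>
      simp (maxDischargeDepth := 3) [n, Submodule.add_mem, smul_mem, mem_span_of_mem]
  have hz : ∀ x ∈ n, ∀ y ∈ n, μ x y ∈ z := by
    refine fun x hx y hy => μ.apply_mem_of_mem_span ?_ hx hy
    simp [h34, h23, h24, h43, h32, h42, hμ.self_eq_zero]
    exact smul_mem _ _ (mem_span_singleton_self _)
  have h0 : ∀ x ∈ z, ∀ y ∈ z, μ x y = 0 := fun x hx y hy =>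
    (mem_bot ℝ).mp (μ.apply_mem_of_mem_span (by simp [hμ.self_eq_zero]) hx hy)
  exact fun x1 x2 x3 x4 x5 x6 x7 x8 =>
    h0 _ (hz _ (hn x1 x2) _ (hn x3 x4)) _ (hz _ (hn x5 x6) _ (hn x7 x8))
end

section
/- Define a 6-dimensional bracket by the nonzero structure constants C⁶₃₆ = −2, C¹₁₃ = −2, C⁴₃₄ = C²₂₃ = C⁴₁₂ = 1, C³₁₆ = 1, C²₄₆ = −1, C²₂₅ = α, C⁴₄₅ = α (α ≠ 0), where [e_a,e_b] = C^c_{ab}e_c extended antisymmetrically. Then this satisfies the Jacobi identity and defines a Lie algebra with Levi decomposition sl(2,ℝ) ⋉ s_{3,1,a=1}: span{e₁,e₃,e₆} is a subalgebra isomorphic to sl(2,ℝ) and span{e₂,e₄,e₅} is a solvable ideal. -/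
/-!
A bilinear bracket is determined by its values on basis vectors. By antisymmetry the fifteen
given brackets fill in the whole table `S31.table`; the Jacobi identity is then a finite check
on basis triples, extended by trilinearity, and the closure properties are checked on spanning
sets. The radical `span{e₂, e₄, e₅}` is solvable because its derived algebra lies in the abelian
subspace `span{e₂, e₄}`.
-/

theorem LinearMap.apply_mem_of_mem_span₂ {R M N P : Type*} [CommSemiring R] [AddCommMonoid M]
    [AddCommMonoid N] [AddCommMonoid P] [Module R M] [Module R N] [Module R P]
    (f : M →ₗ[R] N →ₗ[R] P) {s : Set M} {t : Set N} {p : Submodule R P}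
    (h : ∀ x ∈ s, ∀ y ∈ t, f x y ∈ p) {x : M} {y : N}
    (hx : x ∈ Submodule.span R s) (hy : y ∈ Submodule.span R t) : f x y ∈ p := by
  have hle : Submodule.map₂ f (Submodule.span R s) (Submodule.span R t) ≤ p := by
    rw [Submodule.map₂_span_span, Submodule.span_le]
    rintro _ ⟨x, hx, y, hy, rfl⟩
    exact h x hx y hy
  exact hle (Submodule.apply_mem_map₂ f hx hy)

theorem eq_of_antisymm_of_forall_lt {ι N : Type*} [LinearOrder ι] [AddCommGroup N]
    [IsAddTorsionFree N] {f g : ι → ι → N} (hf : ∀ i j, f j i = -f i j)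
    (hg : ∀ i j, g j i = -g i j) (h : ∀ i j, i < j → f i j = g i j) (i j : ι) :
    f i j = g i j := by
  rcases lt_trichotomy i j with hij | rfl | hji
  · exact h i j hij
  · rw [self_eq_neg.1 (hf i i), self_eq_neg.1 (hg i i)]
  · rw [hf, hg, h j i hji]

section Jacobi

variable {R M ι : Type*} [CommRing R] [AddCommGroup M] [Module R M]

def jacobiator (μ : M →ₗ[R] M →ₗ[R] M) (x y z : M) : M :=
  μ x (μ y z) + μ y (μ z x) + μ z (μ x y)

theorem jacobiator_rotate (μ : M →ₗ[R] M →ₗ[R] M) (x y z : M) :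
    jacobiator μ y z x = jacobiator μ x y z := by
  unfold jacobiator
  abel

/-- Linearity in the first argument together with cyclic symmetry gives linearity in each. -/
theorem jacobiator_eq_zero_of_basis (μ : M →ₗ[R] M →ₗ[R] M) (b : Module.Basis ι R M)
    (h : ∀ i j k, jacobiator μ (b i) (b j) (b k) = 0) (x y z : M) : jacobiator μ x y z = 0 := by
  have extend : ∀ y z : M, (∀ i, jacobiator μ (b i) y z = 0) → ∀ x, jacobiator μ x y z = 0 := by
    intro y z hb x
    have hlin : μ.flip (μ y z) + μ y ∘ₗ μ z + μ z ∘ₗ μ.flip y = 0 := b.ext hb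
    exact LinearMap.congr_fun hlin x
  have h₁ : ∀ j k x, jacobiator μ x (b j) (b k) = 0 := fun j k => extend _ _ (h · j k)
  have h₂ : ∀ k x y, jacobiator μ x y (b k) = 0 := fun k x y => by
    rw [← jacobiator_rotate]
    exact extend _ _ (fun i => (jacobiator_rotate μ x _ _).trans (h₁ i k x)) y
  rw [jacobiator_rotate μ z x y]
  exact extend _ _ (fun i => (jacobiator_rotate μ _ x y).symm.trans (h₂ i x y)) z

end Jacobi

namespace S31

variable {V : Type*} [AddCommGroup V] [Module ℝ V]

/-- Row `i`, column `j` holds the paper's `⁅e_{i+1}, e_{j+1}⁆`, whose `e_k` is `e (k - 1)` here. -/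
def table (e : Fin 6 → V) (α : ℝ) : Fin 6 → Fin 6 → V :=
  ![![0, e 3, (-2 : ℝ) • e 0, 0, 0, e 2],
    ![-e 3, 0, e 1, 0, α • e 1, 0],
    ![(2 : ℝ) • e 0, -e 1, 0, e 3, 0, (-2 : ℝ) • e 5],
    ![0, 0, -e 3, 0, α • e 3, -e 1],
    ![0, -(α • e 1), 0, -(α • e 3), 0, 0],
    ![-e 2, 0, (2 : ℝ) • e 5, e 1, 0, 0]]

theorem table_antisymm (e : Fin 6 → V) (α : ℝ) (i j : Fin 6) :
    table e α j i = -table e α i j := by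
  fin_cases i <;> fin_cases j <;> simp [table, neg_smul]

def levi (e : Fin 6 → V) : Submodule ℝ V := Submodule.span ℝ {e 0, e 2, e 5}

def radical (e : Fin 6 → V) : Submodule ℝ V := Submodule.span ℝ {e 1, e 3, e 4}

def derivedRadical (e : Fin 6 → V) : Submodule ℝ V := Submodule.span ℝ {e 1, e 3}

variable {e : Fin 6 → V} {μ : V →ₗ[ℝ] V →ₗ[ℝ] V} {α : ℝ}

theorem jacobiator_eq_zero (hμ : ∀ i j, μ (e i) (e j) = table e α i j) (i j k : Fin 6) :
    jacobiator μ (e i) (e j) (e k) = 0 := by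
  fin_cases i <;> fin_cases j <;> fin_cases k <;>
    simp only [jacobiator, hμ, table, Fin.isValue, Fin.zero_eta, Fin.mk_one, Fin.reduceFinMk,
      Matrix.cons_val, map_smul, map_neg, map_zero] <;>
    module

theorem bracket_mem_levi (hμ : ∀ i j, μ (e i) (e j) = table e α i j) {x y : V}
    (hx : x ∈ levi e) (hy : y ∈ levi e) : μ x y ∈ levi e := by
  refine LinearMap.apply_mem_of_mem_span₂ μ ?_ hx hy
  rintro _ (rfl | rfl | rfl) _ (rfl | rfl | rfl) <;>
    simp [hμ, table, levi, Submodule.mem_span_of_mem]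

theorem bracket_mem_radical (b : Module.Basis (Fin 6) ℝ V)
    (hμ : ∀ i j, μ (b i) (b j) = table b α i j) (x : V) {y : V} (hy : y ∈ radical b) :
    μ x y ∈ radical b := by
  have hx : x ∈ Submodule.span ℝ (Set.range b) := b.span_eq ▸ Submodule.mem_top
  refine LinearMap.apply_mem_of_mem_span₂ μ ?_ hx hy
  rintro _ ⟨i, rfl⟩ _ (rfl | rfl | rfl) <;> fin_cases i <;>
    simp [hμ, table, radical, Submodule.smul_mem, Submodule.mem_span_of_mem]

theorem bracket_mem_derivedRadical (hμ : ∀ i j, μ (e i) (e j) = table e α i j) {x y : V}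
    (hx : x ∈ radical e) (hy : y ∈ radical e) : μ x y ∈ derivedRadical e := by
  refine LinearMap.apply_mem_of_mem_span₂ μ ?_ hx hy
  rintro _ (rfl | rfl | rfl) _ (rfl | rfl | rfl) <;>
    simp [hμ, table, derivedRadical, Submodule.smul_mem, Submodule.mem_span_of_mem]

theorem bracket_derivedRadical_eq_zero (hμ : ∀ i j, μ (e i) (e j) = table e α i j) {x y : V}
    (hx : x ∈ derivedRadical e) (hy : y ∈ derivedRadical e) : μ x y = 0 := by
  rw [← Submodule.mem_bot ℝ]
  refine LinearMap.apply_mem_of_mem_span₂ μ ?_ hx hy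
  rintro _ (rfl | rfl) _ (rfl | rfl) <;> simp [hμ, table]

end S31

theorem sl2R_semidirect_s31_general
    (V : Type*) [AddCommGroup V] [Module ℝ V]
    (b : Module.Basis (Fin 6) ℝ V)
    (μ : V →ₗ[ℝ] V →ₗ[ℝ] V)
    (halt : ∀ x y : V, μ x y = - μ y x)
    (α : ℝ)
    (h36 : μ (b 2) (b 5) = (-2 : ℝ) • b 5)
    (h13 : μ (b 0) (b 2) = (-2 : ℝ) • b 0)
    (h34 : μ (b 2) (b 3) = b 3)
    (h23 : μ (b 1) (b 2) = b 1)
    (h12 : μ (b 0) (b 1) = b 3)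
    (h16 : μ (b 0) (b 5) = b 2)
    (h46 : μ (b 3) (b 5) = (-1 : ℝ) • b 1)
    (h25 : μ (b 1) (b 4) = α • b 1)
    (h45 : μ (b 3) (b 4) = α • b 3)
    (h14 : μ (b 0) (b 3) = 0)
    (h15 : μ (b 0) (b 4) = 0)
    (h24 : μ (b 1) (b 3) = 0)
    (h26 : μ (b 1) (b 5) = 0)
    (h35 : μ (b 2) (b 4) = 0)
    (h56 : μ (b 4) (b 5) = 0) :
    (∀ x y z : V, μ x (μ y z) + μ y (μ z x) + μ z (μ x y) = 0) ∧
    (∀ x ∈ Submodule.span ℝ {b 0, b 2, b 5}, ∀ y ∈ Submodule.span ℝ {b 0, b 2, b 5},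
      μ x y ∈ Submodule.span ℝ {b 0, b 2, b 5}) ∧
    (∃ E H F : V, Submodule.span ℝ {E, H, F} = Submodule.span ℝ {b 0, b 2, b 5} ∧
      μ H E = (2 : ℝ) • E ∧ μ H F = (-2 : ℝ) • F ∧ μ E F = H) ∧
    (∀ x : V, ∀ y ∈ Submodule.span ℝ {b 1, b 3, b 4},
      μ x y ∈ Submodule.span ℝ {b 1, b 3, b 4}) ∧
    (∀ x1 ∈ Submodule.span ℝ {b 1, b 3, b 4}, ∀ x2 ∈ Submodule.span ℝ {b 1, b 3, b 4},
      ∀ x3 ∈ Submodule.span ℝ {b 1, b 3, b 4}, ∀ x4 ∈ Submodule.span ℝ {b 1, b 3, b 4},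
      μ (μ x1 x2) (μ x3 x4) = 0) := by
  have := IsAddTorsionFree.of_isTorsionFree ℝ V
  have hμ : ∀ i j, μ (b i) (b j) = S31.table b α i j := by
    refine eq_of_antisymm_of_forall_lt (fun i j => halt (b j) (b i)) (S31.table_antisymm b α) ?_
    intro i j
    fin_cases i <;> fin_cases j <;>
      simp [S31.table, h12, h13, h14, h15, h16, h23, h24, h25, h26, h34, h35, h36, h45, h46, h56]
  refine ⟨jacobiator_eq_zero_of_basis μ b (S31.jacobiator_eq_zero hμ),
    fun x hx y hy => S31.bracket_mem_levi hμ hx hy, ⟨b 0, b 2, b 5, rfl, ?_, h36, h16⟩,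
    S31.bracket_mem_radical b hμ, ?_⟩
  · simp [hμ, S31.table]
  · intro x₁ h₁ x₂ h₂ x₃ h₃ x₄ h₄
    exact S31.bracket_derivedRadical_eq_zero hμ (S31.bracket_mem_derivedRadical hμ h₁ h₂)
      (S31.bracket_mem_derivedRadical hμ h₃ h₄)

/-- The 6-dimensional bracket (with `b 0 = e₁`, …, `b 5 = e₆`) given
by the nonzero structure constants `C⁶₃₆ = −2, C¹₁₃ = −2, C⁴₃₄ = C²₂₃ = C⁴₁₂ = 1,
C³₁₆ = 1, C²₄₆ = −1, C²₂₅ = α, C⁴₄₅ = α` (α ≠ 0), i.e.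
`⁅e₃,e₆⁆ = −2e₆`, `⁅e₁,e₃⁆ = −2e₁`, `⁅e₃,e₄⁆ = e₄`, `⁅e₂,e₃⁆ = e₂`, `⁅e₁,e₂⁆ = e₄`,
`⁅e₁,e₆⁆ = e₃`, `⁅e₄,e₆⁆ = −e₂`, `⁅e₂,e₅⁆ = α e₂`, `⁅e₄,e₅⁆ = α e₄` (all others zero,
extended antisymmetrically), satisfies the Jacobi identity and defines a Lie algebra
with Levi decomposition `sl(2,ℝ) ⋉ s₃,₁ (a=1)`: `span{e₁,e₃,e₆}` is a subalgebra
isomorphic to `sl(2,ℝ)` (it carries a spanning `sl₂`-triple), and `span{e₂,e₄,e₅}` is a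
solvable ideal. -/
theorem sl2R_semidirect_s31
    (V : Type*) [AddCommGroup V] [Module ℝ V]
    (b : Module.Basis (Fin 6) ℝ V)
    (μ : V →ₗ[ℝ] V →ₗ[ℝ] V)
    (halt : ∀ x y : V, μ x y = - μ y x)
    (α : ℝ) (hα : α ≠ 0)
    (h36 : μ (b 2) (b 5) = (-2 : ℝ) • b 5)
    (h13 : μ (b 0) (b 2) = (-2 : ℝ) • b 0)
    (h34 : μ (b 2) (b 3) = b 3)
    (h23 : μ (b 1) (b 2) = b 1)
    (h12 : μ (b 0) (b 1) = b 3)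
    (h16 : μ (b 0) (b 5) = b 2)
    (h46 : μ (b 3) (b 5) = (-1 : ℝ) • b 1)
    (h25 : μ (b 1) (b 4) = α • b 1)
    (h45 : μ (b 3) (b 4) = α • b 3)
    (h14 : μ (b 0) (b 3) = 0)
    (h15 : μ (b 0) (b 4) = 0)
    (h24 : μ (b 1) (b 3) = 0)
    (h26 : μ (b 1) (b 5) = 0)
    (h35 : μ (b 2) (b 4) = 0)
    (h56 : μ (b 4) (b 5) = 0) :
    (∀ x y z : V, μ x (μ y z) + μ y (μ z x) + μ z (μ x y) = 0) ∧
    (∀ x ∈ Submodule.span ℝ {b 0, b 2, b 5}, ∀ y ∈ Submodule.span ℝ {b 0, b 2, b 5},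
      μ x y ∈ Submodule.span ℝ {b 0, b 2, b 5}) ∧
    (∃ E H F : V, Submodule.span ℝ {E, H, F} = Submodule.span ℝ {b 0, b 2, b 5} ∧
      μ H E = (2 : ℝ) • E ∧ μ H F = (-2 : ℝ) • F ∧ μ E F = H) ∧
    (∀ x : V, ∀ y ∈ Submodule.span ℝ {b 1, b 3, b 4},
      μ x y ∈ Submodule.span ℝ {b 1, b 3, b 4}) ∧
    (∀ x1 ∈ Submodule.span ℝ {b 1, b 3, b 4}, ∀ x2 ∈ Submodule.span ℝ {b 1, b 3, b 4},
      ∀ x3 ∈ Submodule.span ℝ {b 1, b 3, b 4}, ∀ x4 ∈ Submodule.span ℝ {b 1, b 3, b 4},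
      μ (μ x1 x2) (μ x3 x4) = 0) :=
  sl2R_semidirect_s31_general V b μ halt α h36 h13 h34 h23 h12 h16 h46 h25 h45 h14 h15 h24 h26 h35
    h56
end
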